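/- Let m ≥ 2 be an integer and consider, on the open set of ℝ² (or ℂ²) where x ≠ 0 and y ≠ 0, the functions Ω(x,y) = y²/x^{m-2} and a(x,y) = 1 - x^{m-1}/y. Then the 2-form dΩ ∧ da equals m · dx ∧ dy; equivalently, the Jacobian determinant (∂Ω/∂x)(∂a/∂y) - (∂Ω/∂y)(∂a/∂x) is identically equal to m. -/
import Mathlib


/-- The Jacobian determinant of Ω(x,y) = y²/x^(m-2), a(x,y) = 1 - x^(m-1)/y
on {x ≠ 0, y ≠ 0} is identically m; hence dΩ ∧ da = m · dx ∧ dy. -/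
theorem jacobian_omega_a_eq_m (m : ℕ) (hm : 2 ≤ m) (x y : ℝ)
    (hx : x ≠ 0) (hy : y ≠ 0) :
    (deriv (fun s : ℝ => y ^ 2 / s ^ (m - 2)) x) *
      (deriv (fun s : ℝ => 1 - x ^ (m - 1) / s) y) -
    (deriv (fun s : ℝ => s ^ 2 / x ^ (m - 2)) y) *
      (deriv (fun s : ℝ => 1 - s ^ (m - 1) / y) x) = m := by
  obtain ⟨k, rfl⟩ : ∃ k, m = k + 2 := ⟨m - 2, by omega⟩
  have e2 : k + 2 - 2 = k := by omega
  have e1 : k + 2 - 1 = k + 1 := by omega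
  simp only [e1, e2]
  have hxk : x ^ k ≠ 0 := pow_ne_zero _ hx
  have d1 : deriv (fun s : ℝ => y ^ 2 / s ^ k) x
      = (0 * x ^ k - y ^ 2 * (k * x ^ (k - 1))) / (x ^ k) ^ 2 :=
    ((hasDerivAt_const x (y ^ 2)).div (hasDerivAt_pow k x) hxk).deriv
  have d2 : deriv (fun s : ℝ => 1 - x ^ (k + 1) / s) y
      = 0 - (0 * y - x ^ (k + 1) * 1) / y ^ 2 :=
    ((hasDerivAt_const y (1 : ℝ)).sub
      (((hasDerivAt_const y (x ^ (k + 1))).div (hasDerivAt_id y) hy))).deriv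
  have d3 : deriv (fun s : ℝ => s ^ 2 / x ^ k) y
      = (2 * y ^ (2 - 1)) / x ^ k :=
    ((hasDerivAt_pow 2 y).div_const (x ^ k)).deriv
  have d4 : deriv (fun s : ℝ => 1 - s ^ (k + 1) / y) x
      = 0 - (((k + 1 : ℕ) : ℝ) * x ^ (k + 1 - 1)) / y :=
    ((hasDerivAt_const x (1 : ℝ)).sub
      ((hasDerivAt_pow (k + 1) x).div_const y)).deriv
  rw [d1, d2, d3, d4]
  rcases k with _ | k
  · simp; field_simp
  · simp only [Nat.add_sub_cancel, Nat.cast_add, Nat.cast_one, Nat.cast_ofNat,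
      pow_succ]
    field_simp
    ring
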